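/- Let N ≥ 1 be an integer and q ∈ ℂ with 0 < |q| < 1, and let f(x) = −2 log q · [ ∑_{ℓ≥0} ( 2x²q^{2Nℓ}/(1−x²q^{2Nℓ}) − x²q^{2Nℓ+2}/(1−x²q^{2Nℓ+2}) − x²q^{2Nℓ−2}/(1−x²q^{2Nℓ−2}) ) − x²/(1−x²) + (1/2)·x²q²/(1−x²q²) + (1/2)·x²q^{−2}/(1−x²q^{−2}) − (the same expression with x replaced by x^{−1}) ]. Then for every x ∈ ℂ such that all the values f(q x), f(q² x), …, f(q^N x) are defined: ∑_{u=1}^{N} f(q^u x) = 0. -/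

import Mathlib

/-!
Write `F k = x² q^{2k} / (1 - x² q^{2k})` and `Δ²F k = 2 F k - F (k + 1) - F (k - 1)`. The bracket
defining `f(q^u x)` is a sum of `Δ²F` along the progression `u + Nℤ`: the `x`-half contributes the
terms with `k ≥ u` and, since replacing `x` by `x⁻¹` turns `F k` into `-1 - F (-k)`, the `x⁻¹`-half
contributes those with `k ≤ u`, the boundary terms `±½ Δ²F u` correcting the double count at
`k = u`. Summing over the residues `u = 1, …, N` gives `∑_{k ∈ ℤ} Δ²F k`, which telescopes to `0`
because the first difference of `F` is summable over `ℤ` (`F k` tends geometrically to `0` as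
`k → ∞` and to `-1` as `k → -∞`).
-/

open Complex

/-- Half of the structure function: the expression in square brackets in `f(x)` depending on
`x` (the other half being obtained by `x ↦ x⁻¹`). -/
noncomputable def gHalf (N : ℕ) (q y : ℂ) : ℂ :=
  (∑' l : ℕ, (2 * y ^ 2 * q ^ (2 * (N : ℤ) * (l : ℤ)) / (1 - y ^ 2 * q ^ (2 * (N : ℤ) * (l : ℤ)))
      - y ^ 2 * q ^ (2 * (N : ℤ) * (l : ℤ) + 2) / (1 - y ^ 2 * q ^ (2 * (N : ℤ) * (l : ℤ) + 2))
      - y ^ 2 * q ^ (2 * (N : ℤ) * (l : ℤ) - 2) / (1 - y ^ 2 * q ^ (2 * (N : ℤ) * (l : ℤ) - 2))))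
    - y ^ 2 / (1 - y ^ 2)
    + (1 / 2) * (y ^ 2 * q ^ 2 / (1 - y ^ 2 * q ^ 2))
    + (1 / 2) * (y ^ 2 * q ^ (-2 : ℤ) / (1 - y ^ 2 * q ^ (-2 : ℤ)))

/-- The structure function `f(x)` of the Poisson bracket on the center of the elliptic algebra
`A_{q,p}(sl(N)_c)` at the critical level `c = −N`. -/
noncomputable def fStruct (N : ℕ) (q lq x : ℂ) : ℂ :=
  -2 * lq * (gHalf N q x - gHalf N q x⁻¹)

open Finset Filter Topology

theorem div_one_sub_inv {K : Type*} [Field K] {z : K} (h0 : z ≠ 0) (h1 : z ≠ 1) :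
    z⁻¹ / (1 - z⁻¹) = -1 - z / (1 - z) := by
  have : 1 - z ≠ 0 := sub_ne_zero.mpr h1.symm
  field_simp
  ring

theorem summable_mul_pow_div_one_sub {K : Type*} [NormedField K] [CompleteSpace K] (a : K)
    {r : K} (hr : ‖r‖ < 1) : Summable fun n : ℕ ↦ a * r ^ n / (1 - a * r ^ n) := by
  simp only [div_eq_mul_inv]
  have hgeom : Tendsto (fun n : ℕ ↦ a * r ^ n) atTop (𝓝 0) := by
    simpa using (tendsto_pow_atTop_nhds_zero_of_norm_lt_one hr).const_mul a
  refine Summable.mul_tendsto_const (c := (1 - 0)⁻¹) ?_ ?_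
  · simpa using (summable_geometric_of_lt_one (norm_nonneg r) hr).mul_left ‖a‖
  · rw [Nat.cofinite_eq_atTop]
    exact (hgeom.const_sub 1).inv₀ (by simp)

theorem sum_Icc_sub_telescope {M : Type*} [AddCommGroup M] (d : ℤ → M) (c : ℤ) (n : ℕ) :
    ∑ u ∈ Icc 1 n, (d (u + c - 1) - d (u + c)) = d c - d (n + c) := by
  induction n with
  | zero => simp
  | succ n ih =>
    rw [sum_Icc_succ_top (by omega), ih]
    push_cast
    abel_nf

theorem summable_comp_add_mul {E : Type*} [NormedAddCommGroup E] [CompleteSpace E] {d : ℤ → E}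
    (hd : Summable d) (c : ℤ) {N : ℕ} (hN : N ≠ 0) :
    Summable fun n : ℤ ↦ d (c + N * n) :=
  hd.comp_injective fun m n h ↦ by simpa [hN] using h

theorem exists_mem_Icc_eq_add_mul {N : ℕ} (hN : N ≠ 0) (k : ℤ) :
    ∃ u ∈ Icc 1 N, ∃ m : ℤ, (u : ℤ) = k + N * m := by
  have hN' : (0 : ℤ) < N := by omega
  have h₀ := Int.emod_nonneg (k - 1) hN'.ne'
  have h₁ := Int.emod_lt_of_pos (k - 1) hN'
  have h₂ := Int.emod_add_mul_ediv (k - 1) N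
  refine ⟨((k - 1) % N + 1).toNat, ?_, -((k - 1) / N), ?_⟩
  · rw [mem_Icc]
    omega
  · rw [mul_neg]
    omega

def secondDiff (g : ℤ → ℂ) (k : ℤ) : ℂ := 2 * g k - g (k + 1) - g (k - 1)

theorem secondDiff_eq_fwdDiff_sub (g : ℤ → ℂ) (k : ℤ) :
    secondDiff g k = fwdDiff 1 g (k - 1) - fwdDiff 1 g k := by
  simp only [secondDiff, fwdDiff, sub_add_cancel]
  ring

theorem secondDiff_comp_add (g : ℤ → ℂ) (c k : ℤ) :
    secondDiff (fun m ↦ g (c + m)) k = secondDiff g (c + k) := by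
  simp only [secondDiff, add_assoc, add_sub_assoc]

theorem secondDiff_const_sub_comp_sub (a : ℂ) (g : ℤ → ℂ) (c k : ℤ) :
    secondDiff (fun m ↦ a - g (c - m)) k = -secondDiff g (c - k) := by
  rw [secondDiff, secondDiff, show c - (k + 1) = c - k - 1 by ring,
    show c - (k - 1) = c - k + 1 by ring]
  ring

theorem summable_secondDiff_comp_add_mul {g : ℤ → ℂ} (hg : Summable (fwdDiff 1 g)) (c : ℤ)
    {N : ℕ} (hN : N ≠ 0) :
    Summable fun n : ℤ ↦ secondDiff g (c + N * n) := by
  simp only [secondDiff_eq_fwdDiff_sub]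
  exact ((summable_comp_add_mul hg (c - 1) hN).sub (summable_comp_add_mul hg c hN)).congr
    fun n ↦ by ring_nf

theorem sum_Icc_tsum_secondDiff {g : ℤ → ℂ} (hg : Summable (fwdDiff 1 g)) (N : ℕ) :
    ∑ u ∈ Icc 1 N, ∑' n : ℤ, secondDiff g (u + N * n) = 0 := by
  rcases eq_or_ne N 0 with rfl | hN
  · simp
  have hs (u : ℕ) (_ : u ∈ Icc 1 N) := summable_secondDiff_comp_add_mul hg u hN
  rw [← Summable.tsum_finsetSum hs]
  simp only [secondDiff_eq_fwdDiff_sub, sum_Icc_sub_telescope]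
  have hshift : ∑' n : ℤ, fwdDiff 1 g (N + N * n) = ∑' n : ℤ, fwdDiff 1 g (N * n) := by
    simpa [mul_add, add_comm] using (Equiv.addRight (1 : ℤ)).tsum_eq fun n ↦ fwdDiff 1 g (N * n)
  rw [Summable.tsum_sub (by simpa using summable_comp_add_mul hg 0 hN)
    (summable_comp_add_mul hg N hN), hshift, sub_self]

noncomputable def qFrac (q x : ℂ) (k : ℤ) : ℂ := x ^ 2 * q ^ (2 * k) / (1 - x ^ 2 * q ^ (2 * k))

theorem gHalf_eq_tsum_secondDiff (N : ℕ) (q y : ℂ) :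
    gHalf N q y = ∑' l : ℕ, secondDiff (qFrac q y) (N * l) - secondDiff (qFrac q y) 0 / 2 := by
  simp only [gHalf, secondDiff, qFrac, mul_zero, zero_add, zero_sub, zpow_zero, mul_one]
  ring_nf
  simp only [zpow_ofNat]
  ring

theorem summable_qFrac_nat {q : ℂ} (hq1 : ‖q‖ < 1) (x : ℂ) :
    Summable fun n : ℕ ↦ qFrac q x n := by
  have hr : ‖q ^ 2‖ < 1 := by rw [norm_pow]; exact pow_lt_one₀ (norm_nonneg q) hq1 two_ne_zero
  refine (summable_mul_pow_div_one_sub (x ^ 2) hr).congr fun n ↦ ?_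
  rw [qFrac, zpow_mul, zpow_natCast, zpow_ofNat]

section qFrac

variable {q x : ℂ}

theorem sq_pow_mul_mul_zpow (hq : q ≠ 0) (u : ℕ) (m : ℤ) :
    (q ^ u * x) ^ 2 * q ^ (2 * m) = x ^ 2 * q ^ (2 * (u + m)) := by
  have hqu : (q ^ u) ^ 2 = q ^ (2 * (u : ℤ)) := by
    rw [← pow_mul, mul_comm, ← zpow_natCast]
    push_cast
    rfl
  rw [mul_add, zpow_add₀ hq, mul_pow, hqu]
  ring

theorem qFrac_pow_mul (hq : q ≠ 0) (u : ℕ) (m : ℤ) :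
    qFrac q (q ^ u * x) m = qFrac q x (u + m) := by
  simp only [qFrac, sq_pow_mul_mul_zpow hq]

theorem qFrac_inv (hq : q ≠ 0) (hx : x ≠ 0) {m : ℤ} (h : x ^ 2 * q ^ (2 * -m) ≠ 1) :
    qFrac q x⁻¹ m = -1 - qFrac q x (-m) := by
  have hinv : x⁻¹ ^ 2 * q ^ (2 * m) = (x ^ 2 * q ^ (2 * -m))⁻¹ := by
    rw [mul_inv, inv_pow, mul_neg, zpow_neg, inv_inv]
  rw [qFrac, qFrac, hinv, div_one_sub_inv (by positivity) h]

theorem qFrac_inv_pow_mul (hq : q ≠ 0) (hx : x ≠ 0) (hne : ∀ k : ℤ, x ^ 2 * q ^ (2 * k) ≠ 1)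
    (u : ℕ) (m : ℤ) :
    qFrac q (q ^ u * x)⁻¹ m = -1 - qFrac q x (u - m) := by
  rw [qFrac_inv hq (by positivity) (by rw [sq_pow_mul_mul_zpow hq]; exact hne _),
    qFrac_pow_mul hq, sub_eq_add_neg]
  rfl

theorem summable_fwdDiff_qFrac (hq : q ≠ 0) (hq1 : ‖q‖ < 1) (hx : x ≠ 0)
    (hne : ∀ k : ℤ, x ^ 2 * q ^ (2 * k) ≠ 1) : Summable (fwdDiff 1 (qFrac q x)) := by
  refine Summable.of_nat_of_neg ?_ ?_
  · have hF := summable_qFrac_nat hq1 x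
    refine (((summable_nat_add_iff 1).mpr hF).sub hF).congr fun n ↦ ?_
    simp [fwdDiff]
  · have hG := summable_qFrac_nat hq1 x⁻¹
    have hG' : Summable fun n : ℕ ↦ qFrac q x⁻¹ (n - 1) :=
      (summable_nat_add_iff 1).mp (by simpa using hG)
    have hF (k : ℤ) : qFrac q x (-k) = -1 - qFrac q x⁻¹ k := by
      rw [qFrac_inv hq hx (hne _)]
      ring
    refine (hG.sub hG').congr fun n ↦ ?_
    rw [fwdDiff, show -(n : ℤ) + 1 = -(n - 1) by ring, hF, hF]
    ring

theorem gHalf_pow_mul_sub_gHalf_inv (hq : q ≠ 0) (hq1 : ‖q‖ < 1) (hx : x ≠ 0)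
    (hne : ∀ k : ℤ, x ^ 2 * q ^ (2 * k) ≠ 1) {N : ℕ} (hN : N ≠ 0) (u : ℕ) :
    gHalf N q (q ^ u * x) - gHalf N q (q ^ u * x)⁻¹
      = ∑' n : ℤ, secondDiff (qFrac q x) (u + N * n) := by
  have hplus : qFrac q (q ^ u * x) = fun m ↦ qFrac q x (u + m) := funext (qFrac_pow_mul hq u)
  have hminus : qFrac q (q ^ u * x)⁻¹ = fun m ↦ -1 - qFrac q x (u - m) :=
    funext (qFrac_inv_pow_mul hq hx hne u)
  have hs := summable_secondDiff_comp_add_mul (summable_fwdDiff_qFrac hq hq1 hx hne) u hN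
  have hnat : Summable fun l : ℕ ↦ secondDiff (qFrac q x) (u + N * l) :=
    hs.comp_injective Nat.cast_injective
  have hneg : Summable fun l : ℕ ↦ secondDiff (qFrac q x) (u + N * -l) :=
    hs.comp_injective (neg_injective.comp Nat.cast_injective)
  rw [gHalf_eq_tsum_secondDiff, gHalf_eq_tsum_secondDiff, hplus, hminus,
    Summable.tsum_of_nat_of_neg (f := fun n : ℤ ↦ secondDiff (qFrac q x) (u + N * n)) hnat hneg]
  simp only [secondDiff_comp_add (qFrac q x) u, secondDiff_const_sub_comp_sub (-1) (qFrac q x) u,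
    tsum_neg, mul_neg, ← sub_eq_add_neg, mul_zero, add_zero, sub_zero]
  ring

end qFrac

theorem stmt14_general (N : ℕ) (hN : 1 ≤ N) (q lq : ℂ)
    (hq0 : 0 < ‖q‖) (hq1 : ‖q‖ < 1)
    (x : ℂ)
    (hdef : ∀ u ∈ Finset.Icc 1 N, ∀ m : ℤ,
      (q ^ u * x) ^ 2 ≠ q ^ (2 * (N : ℤ) * m)
      ∧ (q ^ u * x) ^ 2 ≠ q ^ (2 * (N : ℤ) * m + 2)
      ∧ (q ^ u * x) ^ 2 ≠ q ^ (2 * (N : ℤ) * m - 2)) :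
    ∑ u ∈ Finset.Icc 1 N, fStruct N q lq (q ^ u * x) = 0 := by
  have hq : q ≠ 0 := norm_pos_iff.mp hq0
  have hN0 : N ≠ 0 := by omega
  rcases eq_or_ne x 0 with rfl | hx
  · -- `0⁻¹ = 0`, so the two halves of `fStruct` cancel
    simp [fStruct]
  have hne (k : ℤ) : x ^ 2 * q ^ (2 * k) ≠ 1 := by
    intro hk
    obtain ⟨u, hu, m, hum⟩ := exists_mem_Icc_eq_add_mul hN0 k
    refine (hdef u hu m).1 ?_
    calc (q ^ u * x) ^ 2 = (q ^ u * x) ^ 2 * q ^ (2 * (0 : ℤ)) := by simp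
      _ = x ^ 2 * q ^ (2 * k) * q ^ (2 * N * m) := by
        rw [sq_pow_mul_mul_zpow hq, add_zero, hum, mul_assoc, ← zpow_add₀ hq]
        ring_nf
      _ = q ^ (2 * N * m) := by rw [hk, one_mul]
  simp only [fStruct, ← mul_sum, gHalf_pow_mul_sub_gHalf_inv hq hq1 hx hne hN0,
    sum_Icc_tsum_secondDiff (summable_fwdDiff_qFrac hq hq1 hx hne), mul_zero]

/-- The identity `∑_{u=1}^{N} f(q^u x) = 0`, expressing that the product of `N` shifted copies
of the generating function `t(z)` Poisson-commutes with all the generators. -/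
theorem stmt14 (N : ℕ) (hN : 1 ≤ N) (q lq : ℂ)
    (hq0 : 0 < ‖q‖) (hq1 : ‖q‖ < 1)
    (hlq : Complex.exp lq = q) (x : ℂ)
    (hdef : ∀ u ∈ Finset.Icc 1 N, ∀ m : ℤ,
      (q ^ u * x) ^ 2 ≠ q ^ (2 * (N : ℤ) * m)
      ∧ (q ^ u * x) ^ 2 ≠ q ^ (2 * (N : ℤ) * m + 2)
      ∧ (q ^ u * x) ^ 2 ≠ q ^ (2 * (N : ℤ) * m - 2)) :
    ∑ u ∈ Finset.Icc 1 N, fStruct N q lq (q ^ u * x) = 0 :=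
  stmt14_general N hN q lq hq0 hq1 x hdef
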